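/- Let A be an n×n matrix with nonnegative real entries whose tropical spectral radius λ = λ(A) is positive, set B = (λ⁻¹A)* and δ = max_{i,j} B_{ij}, and let J denote the n×n all-ones matrix. Then a vector x of the form x = B⊗u with u ∈ ℝⁿ positive satisfies K(x) = δ (i.e. x is a minimizer of the Hilbert seminorm over that family) if and only if x = (δ⁻¹J ⊕ λ⁻¹A)*⊗u′ for some positive vector u′ ∈ ℝⁿ. -/
import Mathlib


/-- Max-times matrix product: `(A ⊗ B)_ik = max_j a_ij · b_jk`. -/
noncomputable def tMul {n : ℕ} (A B : Matrix (Fin n) (Fin n) ℝ) : Matrix (Fin n) (Fin n) ℝ :=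
  fun i k => ⨆ j, A i j * B j k

/-- Max-times matrix powers, with `A^⊗0 = I`. -/
noncomputable def tPow {n : ℕ} (A : Matrix (Fin n) (Fin n) ℝ) : ℕ → Matrix (Fin n) (Fin n) ℝ
  | 0 => fun i j => if i = j then 1 else 0
  | (k + 1) => tMul A (tPow A k)

/-- Tropical trace: `tr A = max_i a_ii`. -/
noncomputable def tTr {n : ℕ} (A : Matrix (Fin n) (Fin n) ℝ) : ℝ :=
  ⨆ i, A i i

/-- Tropical spectral radius: `λ(A) = max_{1 ≤ k ≤ n} (tr (A^⊗k))^(1/k)`. -/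
noncomputable def tRadius {n : ℕ} (A : Matrix (Fin n) (Fin n) ℝ) : ℝ :=
  ⨆ k : Fin n, (tTr (tPow A ((k : ℕ) + 1))) ^ ((1 : ℝ) / ((k : ℕ) + 1))

/-- Kleene star: `A* = I ⊕ A ⊕ A^⊗2 ⊕ ⋯ ⊕ A^⊗(n−1)` in the max-times algebra. -/
noncomputable def kStar {n : ℕ} (A : Matrix (Fin n) (Fin n) ℝ) : Matrix (Fin n) (Fin n) ℝ :=
  fun i j => ⨆ k : Fin n, tPow A (k : ℕ) i j

/-- Max-times matrix-vector product: `(B ⊗ u)_i = max_j b_ij · u_j`. -/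
noncomputable def tMV {n : ℕ} (B : Matrix (Fin n) (Fin n) ℝ) (u : Fin n → ℝ) : Fin n → ℝ :=
  fun i => ⨆ j, B i j * u j

/-- Hilbert seminorm of a positive vector: `K(x) = (max_i x_i) · (max_j 1/x_j)`. -/
noncomputable def hilbK {n : ℕ} (x : Fin n → ℝ) : ℝ :=
  (⨆ i, x i) * (⨆ j, (x j)⁻¹)

section Helpers

variable {n : ℕ} [Nonempty (Fin n)]

lemma bddA (f : Fin n → ℝ) : BddAbove (Set.range f) :=
  (Set.finite_range f).bddAbove

lemma le_sup (f : Fin n → ℝ) (i : Fin n) : f i ≤ ⨆ j, f j :=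
  le_ciSup (bddA f) i

lemma sup_le' {f : Fin n → ℝ} {a : ℝ} (h : ∀ i, f i ≤ a) : (⨆ i, f i) ≤ a :=
  ciSup_le h

lemma exists_sup (f : Fin n → ℝ) : ∃ i, (⨆ j, f j) = f i := by
  obtain ⟨i, hi⟩ := Finite.exists_max f
  exact ⟨i, le_antisymm (sup_le' hi) (le_sup f i)⟩

lemma mul_sup' {c : ℝ} (hc : 0 ≤ c) (f : Fin n → ℝ) :
    c * (⨆ i, f i) = ⨆ i, c * f i := by
  obtain ⟨i0, h0⟩ := exists_sup f
  refine le_antisymm ?_ (sup_le' fun i => mul_le_mul_of_nonneg_left (le_sup f i) hc)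
  rw [h0]; exact le_sup (fun i => c * f i) i0

lemma sup_nonneg' {f : Fin n → ℝ} (h : ∀ i, 0 ≤ f i) : 0 ≤ ⨆ i, f i := by
  obtain ⟨i0, h0⟩ := exists_sup f; rw [h0]; exact h i0

variable {M N P Q : Matrix (Fin n) (Fin n) ℝ}

lemma tPow_nonneg (hM : ∀ i j, 0 ≤ M i j) (k : ℕ) : ∀ i j, 0 ≤ tPow M k i j := by
  induction k with
  | zero => intro i j; simp only [tPow]; split <;> norm_num
  | succ k ih =>
    intro i j
    exact sup_nonneg' fun l => mul_nonneg (hM i l) (ih l j)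

lemma kStar_nonneg (hM : ∀ i j, 0 ≤ M i j) : ∀ i j, 0 ≤ kStar M i j :=
  fun i j => sup_nonneg' fun k => tPow_nonneg hM k i j

lemma kStar_diag_ge (hM : ∀ i j, 0 ≤ M i j) (i : Fin n) : 1 ≤ kStar M i i := by
  have h0 : tPow M 0 i i = 1 := by simp [tPow]
  have k0 : Fin n := Classical.arbitrary _
  have hp : 0 < n := k0.pos
  calc (1:ℝ) = tPow M ((⟨0, hp⟩ : Fin n) : ℕ) i i := by simp [h0]
  _ ≤ _ := le_sup (fun k : Fin n => tPow M (k : ℕ) i i) ⟨0, hp⟩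

lemma tPow_le_sup_succ (hM : ∀ i j, 0 ≤ M i j) (k : ℕ) (i l j : Fin n) :
    M i l * tPow M k l j ≤ tPow M (k+1) i j :=
  le_sup (fun l => M i l * tPow M k l j) l

/-- product along a path is at most the corresponding power entry -/
lemma path_le_pow (hM : ∀ i j, 0 ≤ M i j) (k : ℕ) (p : ℕ → Fin n) :
    (∏ t ∈ Finset.range k, M (p t) (p (t+1))) ≤ tPow M k (p 0) (p k) := by
  induction k generalizing p with
  | zero => simp [tPow]
  | succ k ih =>
    rw [Finset.prod_range_succ']
    have h1 := ih (fun t => p (t+1))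
    calc (∏ t ∈ Finset.range k, M (p (t+1)) (p (t+1+1))) * M (p 0) (p 1)
        ≤ tPow M k (p 1) (p (k+1)) * M (p 0) (p 1) := by
          apply mul_le_mul_of_nonneg_right _ (hM _ _)
          exact h1
      _ = M (p 0) (p 1) * tPow M k (p 1) (p (k+1)) := mul_comm _ _
      _ ≤ tPow M (k+1) (p 0) (p (k+1)) := tPow_le_sup_succ hM k _ _ _

/-- power entry is witnessed (up to ≤) by some path -/
lemma pow_le_path (hM : ∀ i j, 0 ≤ M i j) (k : ℕ) (i j : Fin n) :
    ∃ p : ℕ → Fin n, p 0 = i ∧ p (k+1) = j ∧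
      tPow M (k+1) i j ≤ ∏ t ∈ Finset.range (k+1), M (p t) (p (t+1)) := by
  induction k generalizing i j with
  | zero =>
    refine ⟨fun t => if t = 0 then i else j, by simp, by simp, ?_⟩
    have h1 : tPow M 1 i j ≤ M i j := by
      show tMul M (tPow M 0) i j ≤ M i j
      refine sup_le' fun l => ?_
      show M i l * (if l = j then (1:ℝ) else 0) ≤ M i j
      split
      · next h => subst h; simp
      · simp [hM i j]
    simpa using h1
  | succ k ih =>
    obtain ⟨l, hl⟩ := exists_sup (fun l => M i l * tPow M (k+1) l j)
    obtain ⟨p', h0, hk, hle⟩ := ih l j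
    refine ⟨fun t => if t = 0 then i else p' (t-1), by simp, by simp [hk], ?_⟩
    show tMul M (tPow M (k+1)) i j ≤ _
    rw [show tMul M (tPow M (k+1)) i j = ⨆ l, M i l * tPow M (k+1) l j from rfl, hl]
    rw [Finset.prod_range_succ']
    have he : ∀ t ∈ Finset.range (k+1),
        M (if t+1 = 0 then i else p' (t+1-1)) (if t+1+1 = 0 then i else p' (t+1+1-1))
          = M (p' t) (p' (t+1)) := by
      intro t _; simp
    rw [Finset.prod_congr rfl he]
    simp only [if_pos rfl, h0]
    calc M i l * tPow M (k+1) l j ≤ M i l * ∏ t ∈ Finset.range (k+1), M (p' t) (p' (t+1)) := by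
          apply mul_le_mul_of_nonneg_left hle (hM _ _)
      _ = (∏ t ∈ Finset.range (k+1), M (p' t) (p' (t+1))) * M i l := mul_comm _ _

lemma pow_mul_pow_le (hM : ∀ i j, 0 ≤ M i j) (s t : ℕ) (i v j : Fin n) :
    tPow M s i v * tPow M t v j ≤ tPow M (s + t) i j := by
  induction s generalizing i with
  | zero =>
    simp only [tPow, Nat.zero_add]
    split
    · next h => subst h; simp
    · simp [tPow_nonneg hM t i j]
  | succ s ih =>
    show tMul M (tPow M s) i v * tPow M t v j ≤ tPow M (s + 1 + t) i j
    obtain ⟨l, hl⟩ := exists_sup (fun l => M i l * tPow M s l v)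
    rw [show tMul M (tPow M s) i v = ⨆ l, M i l * tPow M s l v from rfl, hl]
    have : M i l * tPow M s l v * tPow M t v j ≤ M i l * tPow M (s+t) l j := by
      rw [mul_assoc]
      exact mul_le_mul_of_nonneg_left (ih l) (hM _ _)
    refine this.trans ?_
    have h2 : s + 1 + t = (s + t) + 1 := by omega
    rw [h2]
    exact tPow_le_sup_succ hM (s+t) i l j

end Helpers

section Helpers2
set_option linter.unusedSectionVars false

variable {n : ℕ} [Nonempty (Fin n)] {M N P Q : Matrix (Fin n) (Fin n) ℝ}

lemma sup_mul' {c : ℝ} (hc : 0 ≤ c) (f : Fin n → ℝ) :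
    (⨆ i, f i) * c = ⨆ i, f i * c := by
  rw [mul_comm, mul_sup' hc]
  exact iSup_congr fun i => mul_comm _ _

lemma sup_comm' (f : Fin n → Fin n → ℝ) :
    (⨆ i, ⨆ j, f i j) = ⨆ j, ⨆ i, f i j := by
  refine le_antisymm ?_ ?_
  · refine sup_le' fun i => sup_le' fun j => ?_
    exact le_trans (le_sup (fun i' => f i' j) i) (le_sup (fun j' => ⨆ i', f i' j') j)
  · refine sup_le' fun j => sup_le' fun i => ?_
    exact le_trans (le_sup (fun j' => f i j') j) (le_sup (fun i' => ⨆ j', f i' j') i)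

/-- cycle removal: `M^⊗n ≤ M*` when all traces of powers up to `n` are ≤ 1. -/
lemma pow_n_le_star (hM : ∀ i j, 0 ≤ M i j)
    (htr : ∀ m, 1 ≤ m → m ≤ n → tTr (tPow M m) ≤ 1) (i j : Fin n) :
    tPow M n i j ≤ kStar M i j := by
  have hp : 0 < n := (Classical.arbitrary (Fin n)).pos
  obtain ⟨p, hp0, hpn, hle⟩ := pow_le_path hM (n-1) i j
  rw [show n - 1 + 1 = n by omega] at hpn hle
  -- pigeonhole
  obtain ⟨a', b', hab', heq⟩ :=
    Fintype.exists_ne_map_eq_of_card_lt (fun t : Fin (n+1) => p t) (by simp)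
  set a := min (a' : ℕ) (b' : ℕ) with ha
  set b := max (a' : ℕ) (b' : ℕ) with hb
  have hab : a < b := by
    rcases lt_or_gt_of_ne (fun h : (a':ℕ) = (b':ℕ) => hab' (Fin.ext h)) with h | h <;> omega
  have hbn : b ≤ n := by
    have := a'.isLt; have := b'.isLt; omega
  have hpab : p a = p b := by
    rcases le_total (a' : ℕ) (b' : ℕ) with h | h
    · simpa [ha, hb, min_eq_left h, max_eq_right h] using heq
    · simpa [ha, hb, min_eq_right h, max_eq_left h] using heq.symm
  have hsplit : (∏ t ∈ Finset.range n, M (p t) (p (t+1)))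
      = (∏ t ∈ Finset.range a, M (p t) (p (t+1)))
        * ((∏ t ∈ Finset.range (b-a), M (p (a+t)) (p (a+t+1)))
          * (∏ t ∈ Finset.range (n-b), M (p (b+t)) (p (b+t+1)))) := by
    conv_lhs => rw [show n = a + ((b-a) + (n-b)) by omega]
    rw [Finset.prod_range_add, Finset.prod_range_add]
    congr 1
    congr 1
    apply Finset.prod_congr rfl; intro t _; congr 2 <;> omega
  have h1 : (∏ t ∈ Finset.range a, M (p t) (p (t+1))) ≤ tPow M a i (p a) := by
    have := path_le_pow hM a p; rwa [hp0] at this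
  have h2 : (∏ t ∈ Finset.range (b-a), M (p (a+t)) (p (a+t+1))) ≤ 1 := by
    have := path_le_pow hM (b-a) (fun t => p (a+t))
    simp only [Nat.add_zero] at this
    rw [show a + (b-a) = b by omega, ← hpab] at this
    refine this.trans ?_
    refine le_trans (le_sup (fun i => tPow M (b-a) i i) (p a)) (htr (b-a) (by omega) (by omega))
  have h3 : (∏ t ∈ Finset.range (n-b), M (p (b+t)) (p (b+t+1))) ≤ tPow M (n-b) (p a) j := by
    have := path_le_pow hM (n-b) (fun t => p (b+t))
    simp only [Nat.add_zero] at this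
    rw [show b + (n-b) = n by omega, hpn, ← hpab] at this
    exact this
  have hnn1 : (0:ℝ) ≤ ∏ t ∈ Finset.range a, M (p t) (p (t+1)) :=
    Finset.prod_nonneg fun t _ => hM _ _
  have hnn2 : (0:ℝ) ≤ ∏ t ∈ Finset.range (b-a), M (p (a+t)) (p (a+t+1)) :=
    Finset.prod_nonneg fun t _ => hM _ _
  have hnn3 : (0:ℝ) ≤ ∏ t ∈ Finset.range (n-b), M (p (b+t)) (p (b+t+1)) :=
    Finset.prod_nonneg fun t _ => hM _ _
  have key : tPow M n i j ≤ tPow M a i (p a) * tPow M (n-b) (p a) j := by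
    refine hle.trans ?_
    rw [hsplit]
    have hstep : (∏ t ∈ Finset.range (b-a), M (p (a+t)) (p (a+t+1)))
        * (∏ t ∈ Finset.range (n-b), M (p (b+t)) (p (b+t+1)))
        ≤ tPow M (n-b) (p a) j := by
      calc _ ≤ 1 * tPow M (n-b) (p a) j := mul_le_mul h2 h3 hnn3 zero_le_one
        _ = _ := one_mul _
    exact mul_le_mul h1 hstep (mul_nonneg hnn2 hnn3) (tPow_nonneg hM a i (p a))
  refine key.trans ?_
  refine le_trans (pow_mul_pow_le hM a (n-b) i (p a) j) ?_
  exact le_trans (le_of_eq rfl)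
    (le_sup (fun k : Fin n => tPow M (k : ℕ) i j) ⟨a + (n-b), by omega⟩)

lemma pow_le_star_of_le (hM : ∀ i j, 0 ≤ M i j)
    (htr : ∀ m, 1 ≤ m → m ≤ n → tTr (tPow M m) ≤ 1) {m : ℕ} (hm : m ≤ n) (i j : Fin n) :
    tPow M m i j ≤ kStar M i j := by
  rcases lt_or_eq_of_le hm with h | h
  · exact le_sup (fun k : Fin n => tPow M (k : ℕ) i j) ⟨m, h⟩
  · subst h; exact pow_n_le_star hM htr i j

lemma mul_star_le (hM : ∀ i j, 0 ≤ M i j)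
    (htr : ∀ m, 1 ≤ m → m ≤ n → tTr (tPow M m) ≤ 1) (i l j : Fin n) :
    M i l * kStar M l j ≤ kStar M i j := by
  rw [show kStar M l j = ⨆ k : Fin n, tPow M (k:ℕ) l j from rfl, mul_sup' (hM i l)]
  refine sup_le' fun k => ?_
  refine le_trans (tPow_le_sup_succ hM (k:ℕ) i l j) ?_
  exact pow_le_star_of_le hM htr (by exact k.isLt) i j

lemma pow_le_star (hM : ∀ i j, 0 ≤ M i j)
    (htr : ∀ m, 1 ≤ m → m ≤ n → tTr (tPow M m) ≤ 1) (m : ℕ) (i j : Fin n) :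
    tPow M m i j ≤ kStar M i j := by
  induction m generalizing i j with
  | zero => exact pow_le_star_of_le hM htr (Nat.zero_le n) i j
  | succ m ih =>
    show tMul M (tPow M m) i j ≤ kStar M i j
    refine sup_le' fun l => ?_
    refine le_trans (mul_le_mul_of_nonneg_left (ih l j) (hM i l)) ?_
    exact mul_star_le hM htr i l j

lemma star_mul_star_le (hM : ∀ i j, 0 ≤ M i j)
    (htr : ∀ m, 1 ≤ m → m ≤ n → tTr (tPow M m) ≤ 1) (a b c : Fin n) :
    kStar M a b * kStar M b c ≤ kStar M a c := by
  obtain ⟨s, hs⟩ := exists_sup (fun k : Fin n => tPow M (k:ℕ) a b)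
  obtain ⟨t, ht⟩ := exists_sup (fun k : Fin n => tPow M (k:ℕ) b c)
  show (⨆ k : Fin n, tPow M (k:ℕ) a b) * (⨆ k : Fin n, tPow M (k:ℕ) b c) ≤ _
  rw [hs, ht]
  exact le_trans (pow_mul_pow_le hM _ _ a b c) (pow_le_star hM htr _ a c)

lemma tMV_assoc (hP : ∀ i j, 0 ≤ P i j) (hQ : ∀ i j, 0 ≤ Q i j)
    {v : Fin n → ℝ} (hv : ∀ i, 0 ≤ v i) :
    tMV (tMul P Q) v = tMV P (tMV Q v) := by
  funext i
  show (⨆ j, (⨆ l, P i l * Q l j) * v j) = ⨆ l, P i l * (⨆ j, Q l j * v j)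
  have h1 : ∀ j, (⨆ l, P i l * Q l j) * v j = ⨆ l, P i l * Q l j * v j :=
    fun j => sup_mul' (hv j) _
  have h2 : ∀ l, P i l * (⨆ j, Q l j * v j) = ⨆ j, P i l * (Q l j * v j) :=
    fun l => mul_sup' (hP i l) _
  simp only [h1, h2]
  rw [sup_comm' (fun j l => P i l * Q l j * v j)]
  exact iSup_congr fun l => iSup_congr fun j => by ring

lemma tMV_mono_vec (hM : ∀ i j, 0 ≤ M i j) {v w : Fin n → ℝ}
    (h : ∀ i, v i ≤ w i) (i : Fin n) : tMV M v i ≤ tMV M w i := by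
  refine sup_le' fun j => ?_
  exact le_trans (mul_le_mul_of_nonneg_left (h j) (hM i j)) (le_sup (fun j => M i j * w j) j)

lemma tMV_mono_mat (h : ∀ i j, P i j ≤ Q i j) {v : Fin n → ℝ}
    (hv : ∀ i, 0 ≤ v i) (i : Fin n) : tMV P v i ≤ tMV Q v i := by
  refine sup_le' fun j => ?_
  exact le_trans (mul_le_mul_of_nonneg_right (h i j) (hv j)) (le_sup (fun j => Q i j * v j) j)

lemma tMV_id {v : Fin n → ℝ} (hv : ∀ i, 0 ≤ v i) :
    tMV (tPow M 0) v = v := by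
  funext i
  show (⨆ j, (if i = j then (1:ℝ) else 0) * v j) = v i
  refine le_antisymm (sup_le' fun j => ?_) ?_
  · split
    · next h => subst h; simp
    · simpa using hv i
  · have := le_sup (fun j => (if i = j then (1:ℝ) else 0) * v j) i
    simpa using this

lemma tMV_star_eq (hM : ∀ i j, 0 ≤ M i j) {v : Fin n → ℝ} (hv : ∀ i, 0 ≤ v i) (i : Fin n) :
    tMV (kStar M) v i = ⨆ k : Fin n, tMV (tPow M (k:ℕ)) v i := by
  show (⨆ j, (⨆ k : Fin n, tPow M (k:ℕ) i j) * v j) = _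
  have h1 : ∀ j, (⨆ k : Fin n, tPow M (k:ℕ) i j) * v j = ⨆ k : Fin n, tPow M (k:ℕ) i j * v j :=
    fun j => sup_mul' (hv j) _
  simp only [h1]
  exact sup_comm' _

lemma le_tMV_star (hM : ∀ i j, 0 ≤ M i j) {v : Fin n → ℝ} (hv : ∀ i, 0 ≤ v i) (i : Fin n) :
    v i ≤ tMV (kStar M) v i := by
  have : (1:ℝ) * v i ≤ kStar M i i * v i :=
    mul_le_mul_of_nonneg_right (kStar_diag_ge hM i) (hv i)
  rw [one_mul] at this
  exact this.trans (le_sup (fun j => kStar M i j * v j) i)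

end Helpers2

section Helpers3
set_option linter.unusedSectionVars false

lemma inv_anti' {a b : ℝ} (ha : 0 < a) (h : a⁻¹ ≤ b⁻¹) : b ≤ a := by
  simpa using inv_anti₀ (inv_pos.mpr ha) h

variable {n : ℕ} [Nonempty (Fin n)]

lemma scal_pow (A : Matrix (Fin n) (Fin n) ℝ) {c : ℝ} (hc : 0 ≤ c) (m : ℕ) :
    ∀ i j, tPow (fun i j => c * A i j) m i j = c^m * tPow A m i j := by
  induction m with
  | zero => intro i j; simp [tPow]
  | succ m ih =>
    intro i j
    show (⨆ l, (c * A i l) * tPow (fun i j => c * A i j) m l j)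
      = c^(m+1) * tMul A (tPow A m) i j
    rw [show tMul A (tPow A m) i j = ⨆ l, A i l * tPow A m l j from rfl,
      mul_sup' (by positivity) (fun l => A i l * tPow A m l j)]
    refine iSup_congr fun l => ?_
    rw [ih l j]; ring

lemma trace_pow_le (A : Matrix (Fin n) (Fin n) ℝ) (hA : ∀ i j, 0 ≤ A i j)
    (hpos : 0 < tRadius A) (m : ℕ) (hm1 : 1 ≤ m) (hmn : m ≤ n) :
    tTr (tPow (fun i j => (tRadius A)⁻¹ * A i j) m) ≤ 1 := by
  set lam := tRadius A with hlam
  have hAm : tTr (tPow A m) ≤ lam ^ m := by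
    have hk : m - 1 < n := by omega
    have h := le_sup (fun k : Fin n => (tTr (tPow A ((k:ℕ)+1))) ^ ((1:ℝ)/((k:ℕ)+1)))
      ⟨m-1, hk⟩
    simp only [show (m:ℕ) - 1 + 1 = m from by omega] at h
    -- h : (tTr (tPow A m)) ^ (1/m) ≤ lam
    have ht : 0 ≤ tTr (tPow A m) := sup_nonneg' fun i => tPow_nonneg hA m i i
    rw [show ((m - 1 : ℕ):ℝ) + 1 = (m:ℝ) from by
      push_cast [Nat.cast_sub (by omega : 1 ≤ m)]; ring] at h
    have h' : tTr (tPow A m) ^ ((1:ℝ)/m) ≤ lam := h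
    have := pow_le_pow_left₀ (Real.rpow_nonneg ht _) h' m
    rwa [← Real.rpow_natCast (tTr (tPow A m) ^ ((1:ℝ)/m)) m, ← Real.rpow_mul ht,
      one_div, inv_mul_cancel₀ (by exact_mod_cast (by omega : m ≠ 0)), Real.rpow_one] at this
  have hscal : ∀ i, tPow (fun i j => lam⁻¹ * A i j) m i i = lam⁻¹^m * tPow A m i i :=
    fun i => scal_pow A (by positivity) m i i
  show (⨆ i, tPow (fun i j => lam⁻¹ * A i j) m i i) ≤ 1
  simp only [hscal]
  rw [← mul_sup' (by positivity : (0:ℝ) ≤ lam⁻¹^m) (fun i => tPow A m i i)]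
  calc lam⁻¹^m * (⨆ i, tPow A m i i) ≤ lam⁻¹^m * lam^m :=
        mul_le_mul_of_nonneg_left hAm (by positivity)
    _ = 1 := by
        rw [← mul_pow, inv_mul_cancel₀ (ne_of_gt hpos), one_pow]

end Helpers3

/-- For a nonnegative matrix `A` with positive tropical spectral radius
`λ = λ(A)`, `B = (λ⁻¹ A)*` and `δ = max_{i,j} B_ij`, a vector `x = B ⊗ u` with
`u` positive satisfies `K(x) = δ` (i.e. minimizes the Hilbert seminorm over that
family) if and only if `x = (δ⁻¹ J ⊕ λ⁻¹ A)* ⊗ u'` for some positive `u'`, where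
`J` is the all-ones matrix. -/
theorem worst_differentiating_solutions (n : ℕ) (hn : 1 ≤ n)
    (A : Matrix (Fin n) (Fin n) ℝ) (hA : ∀ i j, 0 ≤ A i j)
    (hpos : 0 < tRadius A)
    (B : Matrix (Fin n) (Fin n) ℝ)
    (hB : B = kStar (fun i j => (tRadius A)⁻¹ * A i j))
    (δ : ℝ) (hδ : δ = ⨆ i, ⨆ j, B i j)
    (u : Fin n → ℝ) (hu : ∀ i, 0 < u i) :
    hilbK (tMV B u) = δ ↔
      ∃ u' : Fin n → ℝ, (∀ i, 0 < u' i) ∧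
        tMV B u = tMV (kStar (fun i j => max (δ⁻¹ * 1) ((tRadius A)⁻¹ * A i j))) u' := by
  haveI : Nonempty (Fin n) := ⟨⟨0, hn⟩⟩
  set lam := tRadius A with hlam
  set M : Matrix (Fin n) (Fin n) ℝ := fun i j => lam⁻¹ * A i j with hM'
  set C : Matrix (Fin n) (Fin n) ℝ := fun i j => max (δ⁻¹ * 1) (lam⁻¹ * A i j) with hC'
  set x : Fin n → ℝ := tMV B u with hx'
  have hCM : ∀ i j, C i j = max (δ⁻¹ * 1) (M i j) := by intro i j; rw [hC', hM']
  have hM : ∀ i j, 0 ≤ M i j := by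
    intro i j; rw [hM']; exact mul_nonneg (inv_nonneg.mpr hpos.le) (hA i j)
  have htrM : ∀ m, 1 ≤ m → m ≤ n → tTr (tPow M m) ≤ 1 := by
    intro m h1 h2; rw [hM']; exact trace_pow_le A hA hpos m h1 h2
  have hBnn : ∀ i j, 0 ≤ B i j := by intro i j; rw [hB]; exact kStar_nonneg hM i j
  have hBd : ∀ i, 1 ≤ B i i := by intro i; rw [hB]; exact kStar_diag_ge hM i
  have hδB : ∀ i j, B i j ≤ δ := by
    intro i j; rw [hδ]
    exact le_trans (le_sup (fun j => B i j) j) (le_sup (fun i => ⨆ j, B i j) i)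
  have hδ1 : (1:ℝ) ≤ δ := le_trans (hBd (Classical.arbitrary _)) (hδB _ _)
  have hδ0 : (0:ℝ) < δ := lt_of_lt_of_le one_pos hδ1
  have hBB : ∀ a b c, B a b * B b c ≤ B a c := by
    intro a b c; rw [hB]; exact star_mul_star_le hM htrM a b c
  have hMB : ∀ i l j, M i l * B l j ≤ B i j := by
    intro i l j; rw [hB]; exact mul_star_le hM htrM i l j
  have hpowB : ∀ m i j, tPow M m i j ≤ B i j := by
    intro m i j; rw [hB]; exact pow_le_star hM htrM m i j
  have hMleB : ∀ i j, M i j ≤ B i j := by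
    intro i j
    calc M i j = M i j * 1 := (mul_one _).symm
      _ ≤ M i j * B j j := mul_le_mul_of_nonneg_left (hBd j) (hM i j)
      _ ≤ B i j := hMB i j j
  have hx : ∀ i, 0 < x i := by
    intro i
    have h1 : u i ≤ B i i * u i := le_mul_of_one_le_left (hu i).le (hBd i)
    have h2 : B i i * u i ≤ tMV B u i := le_sup (fun j => B i j * u j) i
    exact lt_of_lt_of_le (hu i) (h1.trans h2)
  have hxnn : ∀ i, 0 ≤ x i := fun i => (hx i).le
  have hBxle : ∀ i, tMV B x i ≤ x i := by
    intro i
    have hassoc : tMV (tMul B B) u = tMV B (tMV B u) :=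
      tMV_assoc hBnn hBnn (fun i => (hu i).le)
    have h1 : tMV (tMul B B) u i ≤ tMV B u i :=
      tMV_mono_mat (fun i j => sup_le' fun l => hBB i l j) (fun i => (hu i).le) i
    calc tMV B x i = tMV (tMul B B) u i := by rw [hx', hassoc]
      _ ≤ tMV B u i := h1
      _ = x i := by rw [hx']
  have hxBx : ∀ i j, B i j * x j ≤ x i := fun i j =>
    le_trans (le_sup (fun j => B i j * x j) j) (hBxle i)
  obtain ⟨im, him⟩ := exists_sup x
  obtain ⟨jm, hjm⟩ := exists_sup (fun j => (x j)⁻¹)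
  have hxle : ∀ i, x i ≤ x im := by intro i; rw [← him]; exact le_sup x i
  have hinvle : ∀ i, (x i)⁻¹ ≤ (x jm)⁻¹ := by
    intro i; rw [← hjm]; exact le_sup (fun j => (x j)⁻¹) i
  have hxmin : ∀ i, x jm ≤ x i := fun i => inv_anti' (hx i) (hinvle i)
  have hilb_eq : hilbK x = x im * (x jm)⁻¹ := by
    show (⨆ i, x i) * (⨆ j, (x j)⁻¹) = _
    rw [him, hjm]
  have hC : ∀ i j, 0 ≤ C i j := by
    intro i j; rw [hCM]
    exact le_trans (mul_nonneg (inv_nonneg.mpr hδ0.le) zero_le_one) (le_max_left _ _)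
  have hKge : δ ≤ hilbK x := by
    obtain ⟨pp, hp⟩ := exists_sup (fun i => ⨆ j, B i j)
    obtain ⟨qq, hq⟩ := exists_sup (fun j => B pp j)
    have hδpq : δ = B pp qq := by rw [hδ, hp, hq]
    have h1 : δ * x qq ≤ x im := by
      rw [hδpq]; exact (hxBx pp qq).trans (hxle pp)
    rw [hilb_eq]
    calc δ = (δ * x qq) * (x qq)⁻¹ := by
          rw [mul_assoc, mul_inv_cancel₀ (hx qq).ne', mul_one]
      _ ≤ x im * (x jm)⁻¹ :=
          mul_le_mul h1 (hinvle qq) (inv_nonneg.mpr (hx qq).le) (hx im).le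
  constructor
  · intro h
    refine ⟨x, hx, ?_⟩
    have h2 : x im * (x jm)⁻¹ = δ := by rw [← hilb_eq]; exact h
    have hrel : x im = δ * x jm := by
      rw [← h2, mul_assoc, inv_mul_cancel₀ (hx jm).ne', mul_one]
    have hCx : ∀ i, tMV C x i ≤ x i := by
      intro i
      refine sup_le' fun j => ?_
      rw [hCM i j, max_mul_of_nonneg _ _ (hx j).le]
      refine max_le ?_ ?_
      · have h3 : x j ≤ δ * x i := by
          calc x j ≤ x im := hxle j
            _ = δ * x jm := hrel
            _ ≤ δ * x i := mul_le_mul_of_nonneg_left (hxmin i) hδ0.le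
        calc δ⁻¹ * 1 * x j = δ⁻¹ * x j := by ring
          _ ≤ δ⁻¹ * (δ * x i) :=
              mul_le_mul_of_nonneg_left h3 (inv_nonneg.mpr hδ0.le)
          _ = x i := by rw [← mul_assoc, inv_mul_cancel₀ hδ0.ne', one_mul]
      · exact le_trans (mul_le_mul_of_nonneg_right (hMleB i j) (hx j).le) (hxBx i j)
    have hCkx : ∀ k i, tMV (tPow C k) x i ≤ x i := by
      intro k
      induction k with
      | zero => intro i; rw [tMV_id hxnn]
      | succ k ih =>
        intro i
        have hstep : tMV (tPow C (k+1)) x = tMV C (tMV (tPow C k) x) :=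
          tMV_assoc hC (tPow_nonneg hC k) hxnn
        rw [hstep]
        exact le_trans (tMV_mono_vec hC ih i) (hCx i)
    funext i
    refine le_antisymm (le_tMV_star hC hxnn i) ?_
    rw [tMV_star_eq hC hxnn i]
    exact sup_le' fun k => hCkx (k : ℕ) i
  · rintro ⟨u', hu', heq⟩
    have hr1 : ∀ i, 1 ≤ (⨆ l, B i l) := fun i => le_trans (hBd i) (le_sup (fun l => B i l) i)
    have hc1 : ∀ j, 1 ≤ (⨆ l, B l j) := fun j => le_trans (hBd j) (le_sup (fun l => B l j) j)
    have hrδ : ∀ i, (⨆ l, B i l) ≤ δ := fun i => sup_le' fun l => hδB i l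
    have hcδ : ∀ j, (⨆ l, B l j) ≤ δ := fun j => sup_le' fun l => hδB l j
    have hr0 : ∀ i, (0:ℝ) ≤ (⨆ l, B i l) := fun i => le_trans zero_le_one (hr1 i)
    have hc0 : ∀ j, (0:ℝ) ≤ (⨆ l, B l j) := fun j => le_trans zero_le_one (hc1 j)
    have hic : ∀ j, (0:ℝ) ≤ δ⁻¹ * (⨆ l, B l j) :=
      fun j => mul_nonneg (inv_nonneg.mpr hδ0.le) (hc0 j)
    have hcr : ∀ i, (⨆ l, B l i) * (⨆ l, B i l) ≤ δ := by
      intro i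
      obtain ⟨s0, hs0⟩ := exists_sup (fun l => B l i)
      obtain ⟨t0, ht0⟩ := exists_sup (fun l => B i l)
      rw [hs0, ht0]
      exact le_trans (hBB s0 i t0) (hδB s0 t0)
    have hMr : ∀ i l, M i l * (⨆ t, B l t) ≤ (⨆ t, B i t) := by
      intro i l
      rw [mul_sup' (hM i l)]
      exact sup_le' fun t => le_trans (hMB i l t) (le_sup (fun t => B i t) t)
    have hG0 : ∀ i j, (0:ℝ) ≤ (⨆ l, B i l) * (δ⁻¹ * (⨆ l, B l j)) :=
      fun i j => mul_nonneg (hr0 i) (hic j)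
    have hδG : ∀ i j, δ⁻¹ * 1 ≤ (⨆ l, B i l) * (δ⁻¹ * (⨆ l, B l j)) := by
      intro i j
      calc δ⁻¹ * 1 = 1 * (δ⁻¹ * 1) := by ring
        _ ≤ (⨆ l, B i l) * (δ⁻¹ * (⨆ l, B l j)) :=
          mul_le_mul (hr1 i)
            (mul_le_mul_of_nonneg_left (hc1 j) (inv_nonneg.mpr hδ0.le))
            (mul_nonneg (inv_nonneg.mpr hδ0.le) zero_le_one) (hr0 i)
    have hCpow : ∀ m i j, tPow C (m+1) i j
        ≤ max (tPow M (m+1) i j) ((⨆ l, B i l) * (δ⁻¹ * (⨆ l, B l j))) := by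
      intro m
      induction m with
      | zero =>
        intro i j
        show (⨆ l, C i l * tPow C 0 l j) ≤ _
        refine sup_le' fun l => ?_
        by_cases h : l = j
        · subst h
          have h1 : tPow C 0 l l = 1 := by simp [tPow]
          rw [h1, mul_one, hCM]
          refine max_le (le_trans (hδG i l) (le_max_right _ _)) ?_
          refine le_max_of_le_left ?_
          have h2 := tPow_le_sup_succ hM 0 i l l
          rwa [show tPow M 0 l l = 1 from by simp [tPow], mul_one] at h2
        · have h1 : tPow C 0 l j = 0 := by simp [tPow, h]
          rw [h1, mul_zero]
          exact le_max_of_le_right (hG0 i j)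
      | succ m ih =>
        intro i j
        show (⨆ l, C i l * tPow C (m+1) l j) ≤ _
        refine sup_le' fun l => ?_
        have hnn1 : (0:ℝ) ≤ max (tPow M (m+1) l j) ((⨆ t, B l t) * (δ⁻¹ * (⨆ t, B t j))) :=
          le_max_of_le_left (tPow_nonneg hM (m+1) l j)
        have hCl : C i l * tPow C (m+1) l j
            ≤ max (δ⁻¹*1) (M i l) * max (tPow M (m+1) l j) ((⨆ t, B l t) * (δ⁻¹ * (⨆ t, B t j))) := by
          rw [hCM i l]
          exact mul_le_mul_of_nonneg_left (ih l j)
            (le_trans (mul_nonneg (inv_nonneg.mpr hδ0.le) zero_le_one) (le_max_left _ _))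
        refine hCl.trans ?_
        rw [max_mul_of_nonneg _ _ hnn1,
          mul_max_of_nonneg _ _ (mul_nonneg (inv_nonneg.mpr hδ0.le) zero_le_one),
          mul_max_of_nonneg _ _ (hM i l)]
        refine max_le (max_le ?_ ?_) (max_le ?_ ?_)
        · refine le_max_of_le_right ?_
          calc δ⁻¹ * 1 * tPow M (m+1) l j = δ⁻¹ * tPow M (m+1) l j := by ring
            _ ≤ δ⁻¹ * (⨆ t, B t j) :=
                mul_le_mul_of_nonneg_left
                  (le_trans (hpowB (m+1) l j) (le_sup (fun t => B t j) l))
                  (inv_nonneg.mpr hδ0.le)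
            _ ≤ (⨆ l, B i l) * (δ⁻¹ * (⨆ t, B t j)) :=
                le_mul_of_one_le_left (hic j) (hr1 i)
        · refine le_max_of_le_right ?_
          calc δ⁻¹ * 1 * ((⨆ t, B l t) * (δ⁻¹ * (⨆ t, B t j)))
              = (δ⁻¹ * (⨆ t, B l t)) * (δ⁻¹ * (⨆ t, B t j)) := by ring
            _ ≤ 1 * (δ⁻¹ * (⨆ t, B t j)) := by
                refine mul_le_mul_of_nonneg_right ?_ (hic j)
                calc δ⁻¹ * (⨆ t, B l t) ≤ δ⁻¹ * δ :=
                      mul_le_mul_of_nonneg_left (hrδ l) (inv_nonneg.mpr hδ0.le)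
                  _ = 1 := inv_mul_cancel₀ hδ0.ne'
            _ ≤ (⨆ l, B i l) * (δ⁻¹ * (⨆ t, B t j)) :=
                mul_le_mul_of_nonneg_right (hr1 i) (hic j)
        · exact le_max_of_le_left (tPow_le_sup_succ hM (m+1) i l j)
        · refine le_max_of_le_right ?_
          calc M i l * ((⨆ t, B l t) * (δ⁻¹ * (⨆ t, B t j)))
              = (M i l * (⨆ t, B l t)) * (δ⁻¹ * (⨆ t, B t j)) := by ring
            _ ≤ (⨆ l, B i l) * (δ⁻¹ * (⨆ t, B t j)) :=
                mul_le_mul_of_nonneg_right (hMr i l) (hic j)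
    have htrC : ∀ m, 1 ≤ m → m ≤ n → tTr (tPow C m) ≤ 1 := by
      intro m h1 h2
      obtain ⟨m', rfl⟩ : ∃ m', m = m' + 1 := ⟨m - 1, by omega⟩
      refine sup_le' fun i => ?_
      refine le_trans (hCpow m' i i) (max_le ?_ ?_)
      · exact le_trans (le_sup (fun i => tPow M (m'+1) i i) i) (htrM (m'+1) h1 h2)
      · calc (⨆ l, B i l) * (δ⁻¹ * (⨆ l, B l i)) = δ⁻¹ * ((⨆ l, B l i) * (⨆ l, B i l)) := by ring
          _ ≤ δ⁻¹ * δ := mul_le_mul_of_nonneg_left (hcr i) (inv_nonneg.mpr hδ0.le)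
          _ = 1 := inv_mul_cancel₀ hδ0.ne'
    have hCxle : ∀ k, tMV C x k ≤ x k := by
      intro k
      rw [heq, ← tMV_assoc hC (kStar_nonneg hC) (fun i => (hu' i).le)]
      refine tMV_mono_mat (fun i j => ?_) (fun i => (hu' i).le) k
      exact sup_le' fun l => mul_star_le hC htrC i l j
    have hd : ∀ i k, δ⁻¹ * x i ≤ x k := by
      intro i k
      have h1 : δ⁻¹ * 1 ≤ C k i := by rw [hCM]; exact le_max_left _ _
      calc δ⁻¹ * x i = δ⁻¹ * 1 * x i := by ring
        _ ≤ C k i * x i := mul_le_mul_of_nonneg_right h1 (hx i).le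
        _ ≤ tMV C x k := le_sup (fun j => C k j * x j) i
        _ ≤ x k := hCxle k
    refine le_antisymm ?_ hKge
    rw [hilb_eq]
    have h1 : x im ≤ δ * x jm := by
      have h2 := hd im jm
      calc x im = δ * (δ⁻¹ * x im) := by
            rw [← mul_assoc, mul_inv_cancel₀ hδ0.ne', one_mul]
        _ ≤ δ * x jm := mul_le_mul_of_nonneg_left h2 hδ0.le
    calc x im * (x jm)⁻¹ ≤ (δ * x jm) * (x jm)⁻¹ :=
          mul_le_mul_of_nonneg_right h1 (inv_nonneg.mpr (hx jm).le)
      _ = δ := by rw [mul_assoc, mul_inv_cancel₀ (hx jm).ne', mul_one]
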